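/- For every pushdown system P = (Q, Γ, A, Δ), let U, V ⊆ Q and assume that for all p ∈ U there are r_p ∈ Q and χ_p ∈ Γ⁺ such that eats_{χ_p}(r_p) ⊆ V, and conversely for all r ∈ V there are p_r ∈ Q and ξ_r ∈ Γ⁺ such that eats_{ξ_r}(p_r) ⊆ U. If for some μ₁, μ₂, ν₁, ν₂ ∈ RegStr(Γ) we have, for all i ∈ {1, 2}: pμ_i ∼ r_p χ_p ν_i for all p ∈ U, and rν_i ∼ p_r ξ_r μ_i for all r ∈ V, then pμ₁ ∼ pμ₂ for all p ∈ U and rν₁ ∼ rν₂ for all r ∈ V. -/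

import Mathlib

/-- Stack contents: finite (a list in `Γ*`) or infinite (a stream, used for `αβ^ω`). -/
def SC (Γ : Type) : Type := List Γ ⊕ Stream' Γ

namespace SC

/-- Put one symbol on top of a stack content. -/
def cons {Γ : Type} (X : Γ) : SC Γ → SC Γ
  | Sum.inl l => Sum.inl (X :: l)
  | Sum.inr s => Sum.inr (Stream'.cons X s)

/-- Put a finite word on top of a stack content. -/
def push {Γ : Type} (γ : List Γ) : SC Γ → SC Γ
  | Sum.inl l => Sum.inl (γ ++ l)
  | Sum.inr s => Sum.inr (Stream'.appendStream' γ s)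

end SC

/-- `listPow β i = β^i`, the `i`-fold concatenation of `β`. -/
def listPow {Γ : Type} (β : List Γ) : ℕ → List Γ
  | 0 => []
  | n + 1 => β ++ listPow β n

/-- The infinite stack content `β^ω` (for nonempty `β`). -/
def cycSC {Γ : Type} (β : List Γ) (h : β ≠ []) : SC Γ := Sum.inr (Stream'.cycle β h)

/-- A pushdown system, given by its (finite) transition relation
`Δ ⊆ Q × Γ × A × Q × Γ*`. -/
structure PDS (Q Γ A : Type) where
  Δ : Finset (Q × Γ × A × Q × List Γ)

namespace PDS

variable {Q Γ A : Type}

/-- The size `|P| = |Q| + |Γ| + |A| + |Δ|` of a pushdown system. -/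
def size (P : PDS Q Γ A) [Fintype Q] [Fintype Γ] [Fintype A] : ℕ :=
  Fintype.card Q + Fintype.card Γ + Fintype.card A + P.Δ.card

/-- Push-pop normal form: every transition pushes a word of length at most 2. -/
def PushPop (P : PDS Q Γ A) : Prop := ∀ δ ∈ P.Δ, δ.2.2.2.2.length ≤ 2

/-- The `a`-labeled step relation on configurations: `pXσ →_a qγσ`. -/
def Step (P : PDS Q Γ A) (a : A) (s t : Q × SC Γ) : Prop :=
  ∃ p X q γ σ, (p, X, a, q, γ) ∈ P.Δ ∧ s = (p, SC.cons X σ) ∧ t = (q, SC.push γ σ)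

/-- A step with some label. -/
def StepAny (P : PDS Q Γ A) (s t : Q × SC Γ) : Prop := ∃ a, P.Step a s t

/-- Reachability `→*`. -/
def Reach (P : PDS Q Γ A) : (Q × SC Γ) → (Q × SC Γ) → Prop :=
  Relation.ReflTransGen P.StepAny

/-- `StepN P n s t` : there is a path of length exactly `n` from `s` to `t`. -/
def StepN (P : PDS Q Γ A) : ℕ → (Q × SC Γ) → (Q × SC Γ) → Prop
  | 0, s, t => s = t
  | n + 1, s, t => ∃ u, P.StepAny s u ∧ StepN P n u t

/-- `R` is a bisimulation. -/
def IsBisim (P : PDS Q Γ A) (R : (Q × SC Γ) → (Q × SC Γ) → Prop) : Prop :=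
  ∀ s t, R s t → ∀ a,
    (∀ s', P.Step a s s' → ∃ t', P.Step a t t' ∧ R s' t') ∧
    (∀ t', P.Step a t t' → ∃ s', P.Step a s s' ∧ R s' t')

/-- Bisimilarity `s ∼ t`. -/
def Bisim (P : PDS Q Γ A) (s t : Q × SC Γ) : Prop := ∃ R, P.IsBisim R ∧ R s t

/-- `eats_α(T) = { r | ∃ q ∈ T, qα →* r }`. -/
def eats (P : PDS Q Γ A) (α : List Γ) (T : Set Q) : Set Q :=
  {r | ∃ q ∈ T, P.Reach (q, Sum.inl α) (r, Sum.inl ([] : List Γ))}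

/-- `(α, β)` (with `β` nonempty) is a linked pair if `eats_α = eats_{αβ}`
and `eats_β = eats_{ββ}`. -/
def LinkedPair (P : PDS Q Γ A) (α β : List Γ) : Prop :=
  β ≠ [] ∧ P.eats α = P.eats (α ++ β) ∧ P.eats β = P.eats (β ++ β)

/-- Applying one concrete transition `δ = (p, X, a, q, γ)`. -/
def TStep (P : PDS Q Γ A) (δ : Q × Γ × A × Q × List Γ) (s t : Q × SC Γ) : Prop :=
  δ ∈ P.Δ ∧ ∃ σ, s = (δ.1, SC.cons δ.2.1 σ) ∧ t = (δ.2.2.2.1, SC.push δ.2.2.2.2 σ)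

/-- `RunTo P ρ s t` : applying the sequence of transitions `ρ` starting from `s`
yields `t`. -/
def RunTo (P : PDS Q Γ A) : List (Q × Γ × A × Q × List Γ) → (Q × SC Γ) → (Q × SC Γ) → Prop
  | [], s, t => s = t
  | δ :: ρ, s, t => ∃ u, P.TStep δ s u ∧ RunTo P ρ u t

/-- Bisimulation classes of configurations reachable from `s₀`
(the states of the bisimulation quotient of `L(P, s₀)`). -/
def classes (P : PDS Q Γ A) (s₀ : Q × SC Γ) : Set (Set (Q × SC Γ)) :=
  {c | ∃ s, P.Reach s₀ s ∧ c = {t | P.Reach s₀ t ∧ P.Bisim s t}}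

/-- The `a`-labeled step relation on bisimulation classes. -/
def classStep (P : PDS Q Γ A) (a : A) (c d : Set (Q × SC Γ)) : Prop :=
  ∃ s ∈ c, ∃ t ∈ d, P.Step a s t

end PDS

/-- `StackGrowth` of a single transition: `|γ| − 1`. -/
def tGrowth {Q Γ A : Type} (δ : Q × Γ × A × Q × List Γ) : ℤ := (δ.2.2.2.2.length : ℤ) - 1

/-- `StackGrowth` of a run. -/
def runGrowth {Q Γ A : Type} (ρ : List (Q × Γ × A × Q × List Γ)) : ℤ := (ρ.map tGrowth).sum

/-- A run is augmenting if every prefix has nonnegative stack growth. -/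
def Augmenting {Q Γ A : Type} (ρ : List (Q × Γ × A × Q × List Γ)) : Prop :=
  ∀ i ≤ ρ.length, 0 ≤ runGrowth (ρ.take i)

/-- A digging sequence `(r 0, …, r h)` for `(q, α, β)`. -/
def DiggingSeq {Q Γ A : Type} (P : PDS Q Γ A) (q : Q) (α β : List Γ)
    (h : ℕ) (r : ℕ → Q) : Prop :=
  r 0 ∈ P.eats α {q} ∧ ∀ d, 1 ≤ d → d ≤ h → r d ∈ P.eats β {r (d - 1)}

/-- A `β^ω`-avoiding digging sequence `(r 0, …, r h)` for `(q, α, β)`,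
with respect to the configuration `qαβ^eγ` (where `e ≥ 1`). -/
def Avoiding {Q Γ A : Type} (P : PDS Q Γ A) (q : Q) (α β γ : List Γ) (hβ : β ≠ [])
    (e h : ℕ) (r : ℕ → Q) : Prop :=
  DiggingSeq P q α β h r ∧
  (∃ r' ∈ P.eats β {r 0},
      ¬ P.Bisim (r', Sum.inl (listPow β (e - 1) ++ γ)) (r', cycSC β hβ)) ∧
  ∀ d, 1 ≤ d → d ≤ h →
    ¬ P.Bisim (r d, Sum.inl (listPow β (e - d) ++ γ)) (r d, cycSC β hβ)

/-- The class of elementary functions `ℕ^k → ℕ`: the smallest class containing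
constants, projections, addition, multiplication and exponentiation, and closed
under composition. -/
inductive ElementaryFun : {k : ℕ} → ((Fin k → ℕ) → ℕ) → Prop
  | const {k : ℕ} (c : ℕ) : ElementaryFun (fun _ : Fin k → ℕ => c)
  | proj {k : ℕ} (i : Fin k) : ElementaryFun (fun v : Fin k → ℕ => v i)
  | add : ElementaryFun (fun v : Fin 2 → ℕ => v 0 + v 1)
  | mul : ElementaryFun (fun v : Fin 2 → ℕ => v 0 * v 1)
  | exp : ElementaryFun (fun v : Fin 2 → ℕ => v 0 ^ v 1)
  | comp {k m : ℕ} (f : (Fin m → ℕ) → ℕ) (g : Fin m → (Fin k → ℕ) → ℕ) :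
      ElementaryFun f → (∀ i, ElementaryFun (g i)) →
      ElementaryFun (fun v : Fin k → ℕ => f (fun i => g i v))

/-- A binary function `ℕ² → ℕ` is elementary. -/
def Elementary2 (φ : ℕ → ℕ → ℕ) : Prop :=
  ElementaryFun (fun v : Fin 2 → ℕ => φ (v 0) (v 1))

/-- A ternary function `ℕ³ → ℕ` is elementary. -/
def Elementary3 (φ : ℕ → ℕ → ℕ → ℕ) : Prop :=
  ElementaryFun (fun v : Fin 3 → ℕ => φ (v 0) (v 1) (v 2))

/-- `prodSeg w i len = w (i+1) * w (i+2) * ⋯ * w (i+len+1)` in a semigroup. -/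
def prodSeg {S : Type} [Semigroup S] (w : ℕ → S) (i : ℕ) : ℕ → S
  | 0 => w (i + 1)
  | len + 1 => prodSeg w i len * w (i + len + 2)

/-- `catSeg α i len = α (i+1) ++ α (i+2) ++ ⋯ ++ α (i+len+1)`. -/
def catSeg {Γ : Type} (α : ℕ → List Γ) (i : ℕ) : ℕ → List Γ
  | 0 => α (i + 1)
  | len + 1 => catSeg α i len ++ α (i + len + 2)

/-! The relation pairing `qσμ₁` with `qσμ₂` whenever `σ` can only be consumed into a state of `U`
(and likewise `qσν₁`, `qσν₂` for `V`) is a bisimulation up to bisimilarity. Steps inside `σ` are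
copied verbatim; once `σ` is consumed we reach some `p ∈ U`, where the hypotheses replace `pμᵢ` by the
bisimilar `r_p χ_p νᵢ`, and the first step of the latter consumes part of the nonempty `χ_p`, which
can only be consumed into `V`. -/

namespace SC

variable {Γ : Type}

theorem push_nil (ω : SC Γ) : push [] ω = ω := by
  cases ω <;> rfl

theorem push_cons (X : Γ) (l : List Γ) (ω : SC Γ) : push (X :: l) ω = cons X (push l ω) := by
  cases ω <;> rfl

theorem push_push (γ σ : List Γ) (ω : SC Γ) : push γ (push σ ω) = push (γ ++ σ) ω := by
  cases ω <;> simp [push, SC]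

theorem cons_eq_cons {X Y : Γ} {σ τ : SC Γ} : cons X σ = cons Y τ ↔ X = Y ∧ σ = τ := by
  cases σ <;> cases τ <;> simp [cons, SC, Stream'.cons_injective2.eq_iff]

theorem cons_ne_nil (X : Γ) (σ : SC Γ) : cons X σ ≠ Sum.inl [] := by
  cases σ <;> simp [cons, SC]

end SC

namespace PDS

variable {Q Γ A : Type} {P : PDS Q Γ A}

theorem bisim_refl (P : PDS Q Γ A) (s : Q × SC Γ) : P.Bisim s s :=
  ⟨Eq, by rintro s _ rfl a; exact ⟨fun s' h => ⟨s', h, rfl⟩, fun t' h => ⟨t', h, rfl⟩⟩, rfl⟩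

theorem Bisim.symm {s t : Q × SC Γ} (h : P.Bisim s t) : P.Bisim t s := by
  obtain ⟨R, hR, hst⟩ := h
  exact ⟨flip R, fun x y hxy a => ⟨(hR y x hxy a).2, (hR y x hxy a).1⟩, hst⟩

theorem Bisim.trans {s t u : Q × SC Γ} (h₁ : P.Bisim s t) (h₂ : P.Bisim t u) : P.Bisim s u := by
  obtain ⟨R₁, hR₁, hst⟩ := h₁
  obtain ⟨R₂, hR₂, htu⟩ := h₂
  refine ⟨Relation.Comp R₁ R₂, ?_, t, hst, htu⟩
  rintro x z ⟨y, hxy, hyz⟩ a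
  constructor
  · intro x' hx'
    obtain ⟨y', hy', hxy'⟩ := (hR₁ x y hxy a).1 x' hx'
    obtain ⟨z', hz', hyz'⟩ := (hR₂ y z hyz a).1 y' hy'
    exact ⟨z', hz', y', hxy', hyz'⟩
  · intro z' hz'
    obtain ⟨y', hy', hyz'⟩ := (hR₂ y z hyz a).2 z' hz'
    obtain ⟨x', hx', hxy'⟩ := (hR₁ x y hxy a).2 y' hy'
    exact ⟨x', hx', y', hxy', hyz'⟩

theorem isBisim_bisim (P : PDS Q Γ A) : P.IsBisim P.Bisim := by
  rintro s t ⟨R, hR, hst⟩ a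
  exact ⟨fun s' hs' => ((hR s t hst a).1 s' hs').imp fun _ ⟨h, hR'⟩ => ⟨h, R, hR, hR'⟩,
    fun t' ht' => ((hR s t hst a).2 t' ht').imp fun _ ⟨h, hR'⟩ => ⟨h, R, hR, hR'⟩⟩

def UpToBisim (P : PDS Q Γ A) (R : (Q × SC Γ) → (Q × SC Γ) → Prop) (s t : Q × SC Γ) : Prop :=
  ∃ s' t', P.Bisim s s' ∧ R s' t' ∧ P.Bisim t' t

theorem UpToBisim.mono {R R' : (Q × SC Γ) → (Q × SC Γ) → Prop} (hRR' : ∀ s t, R s t → R' s t)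
    {s t : Q × SC Γ} (h : P.UpToBisim R s t) : P.UpToBisim R' s t := by
  obtain ⟨s', t', hs, hR, ht⟩ := h
  exact ⟨s', t', hs, hRR' s' t' hR, ht⟩

def IsSimUpToBisim (P : PDS Q Γ A) (R : (Q × SC Γ) → (Q × SC Γ) → Prop) : Prop :=
  ∀ s t, R s t → ∀ a s', P.Step a s s' → ∃ t', P.Step a t t' ∧ P.UpToBisim R s' t'

theorem bisim_of_isSimUpToBisim {R : (Q × SC Γ) → (Q × SC Γ) → Prop}
    (h₁ : P.IsSimUpToBisim R) (h₂ : P.IsSimUpToBisim (flip R)) {s t : Q × SC Γ} (hst : R s t) :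
    P.Bisim s t := by
  refine ⟨P.UpToBisim R, ?_, s, t, P.bisim_refl s, hst, P.bisim_refl t⟩
  rintro s t ⟨s₀, t₀, hs, hR, ht⟩ a
  constructor
  · intro s' hs'
    obtain ⟨s₀', hs₀', hs'⟩ := (P.isBisim_bisim s s₀ hs a).1 s' hs'
    obtain ⟨t₀', ht₀', x, y, hx, hxy, hy⟩ := h₁ s₀ t₀ hR a s₀' hs₀'
    obtain ⟨t', ht', ht₀'t'⟩ := (P.isBisim_bisim t₀ t ht a).1 t₀' ht₀'
    exact ⟨t', ht', x, y, hs'.trans hx, hxy, hy.trans ht₀'t'⟩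
  · intro t' ht'
    obtain ⟨t₀', ht₀', ht₀'t'⟩ := (P.isBisim_bisim t₀ t ht a).2 t' ht'
    obtain ⟨s₀', hs₀', y, x, hy, hxy, hx⟩ := h₂ t₀ s₀ hR a t₀' ht₀'
    obtain ⟨s', hs', hs's₀'⟩ := (P.isBisim_bisim s s₀ hs a).2 s₀' hs₀'
    exact ⟨s', hs', x, y, hs's₀'.trans hx.symm, hxy, hy.symm.trans ht₀'t'⟩

theorem not_step_nil (a : A) (q : Q) (t : Q × SC Γ) : ¬ P.Step a (q, Sum.inl []) t := by
  rintro ⟨p, X, q', γ, σ, -, hs, -⟩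
  exact SC.cons_ne_nil X σ (Prod.ext_iff.mp hs).2.symm

theorem eats_nil (P : PDS Q Γ A) (T : Set Q) : P.eats [] T = T := by
  ext r
  refine ⟨fun ⟨q, hq, hreach⟩ => ?_, fun hr => ⟨r, hr, Relation.ReflTransGen.refl⟩⟩
  rcases Relation.ReflTransGen.cases_head hreach with heq | ⟨u, ⟨a, hstep⟩, -⟩
  · obtain ⟨rfl, -⟩ := Prod.ext_iff.mp heq
    exact hq
  · exact absurd hstep (not_step_nil a q u)

theorem step_push_cons_iff {a : A} {q : Q} {X : Γ} {σ : List Γ} {ω : SC Γ} {t : Q × SC Γ} :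
    P.Step a (q, SC.push (X :: σ) ω) t ↔
      ∃ q' γ, (q, X, a, q', γ) ∈ P.Δ ∧ t = (q', SC.push (γ ++ σ) ω) := by
  rw [SC.push_cons]
  constructor
  · rintro ⟨p, Y, q', γ, τ, hδ, hs, rfl⟩
    obtain ⟨rfl, hYX⟩ := Prod.ext_iff.mp hs
    obtain ⟨rfl, rfl⟩ := SC.cons_eq_cons.mp hYX
    exact ⟨q', γ, hδ, by rw [SC.push_push]⟩
  · rintro ⟨q', γ, hδ, rfl⟩
    exact ⟨q, X, q', γ, SC.push σ ω, hδ, rfl, by rw [SC.push_push]⟩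

theorem eats_cons_of_mem {a : A} {q q' : Q} {X : Γ} {γ : List Γ} (hδ : (q, X, a, q', γ) ∈ P.Δ)
    (σ : List Γ) : P.eats (γ ++ σ) {q'} ⊆ P.eats (X :: σ) {q} := by
  rintro r ⟨_, rfl, hreach⟩
  refine ⟨q, rfl, Relation.ReflTransGen.head ⟨a, ?_⟩ hreach⟩
  simpa [SC.push] using (step_push_cons_iff (ω := Sum.inl [])).mpr ⟨_, γ, hδ, rfl⟩

def SharedTop (P : PDS Q Γ A) (W : Set Q) (ω₁ ω₂ : SC Γ) (s t : Q × SC Γ) : Prop :=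
  ∃ q σ, P.eats σ {q} ⊆ W ∧ s = (q, SC.push σ ω₁) ∧ t = (q, SC.push σ ω₂)

theorem sharedTop_self {W : Set Q} {q : Q} (hq : q ∈ W) (ω₁ ω₂ : SC Γ) :
    P.SharedTop W ω₁ ω₂ (q, ω₁) (q, ω₂) :=
  ⟨q, [], by rwa [eats_nil, Set.singleton_subset_iff], by rw [SC.push_nil], by rw [SC.push_nil]⟩

theorem flip_sharedTop (W : Set Q) (ω₁ ω₂ : SC Γ) :
    flip (P.SharedTop W ω₁ ω₂) = P.SharedTop W ω₂ ω₁ := by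
  funext s t
  exact propext ⟨fun ⟨q, σ, hσ, ht, hs⟩ => ⟨q, σ, hσ, hs, ht⟩,
    fun ⟨q, σ, hσ, hs, ht⟩ => ⟨q, σ, hσ, ht, hs⟩⟩

section SharedTopStep

variable {W W' : Set Q} {f : Q → Q} {ζ : Q → List Γ} {ω₁ ω₂ ω₁' ω₂' : SC Γ}

theorem SharedTop.exists_step (hζ : ∀ q ∈ W, ζ q ≠ [] ∧ P.eats (ζ q) {f q} ⊆ W')
    (h₁ : ∀ q ∈ W, P.Bisim (q, ω₁) (f q, SC.push (ζ q) ω₁'))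
    (h₂ : ∀ q ∈ W, P.Bisim (q, ω₂) (f q, SC.push (ζ q) ω₂'))
    {s t s' : Q × SC Γ} (hst : P.SharedTop W ω₁ ω₂ s t) {a : A} (hs : P.Step a s s') :
    ∃ t', P.Step a t t' ∧
      P.UpToBisim (fun x y => P.SharedTop W ω₁ ω₂ x y ∨ P.SharedTop W' ω₁' ω₂' x y) s' t' := by
  obtain ⟨q, σ, hσ, rfl, rfl⟩ := hst
  match σ, hσ, hs with
  | X :: σ, hσ, hs =>
    obtain ⟨q', γ, hδ, rfl⟩ := step_push_cons_iff.mp hs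
    exact ⟨_, step_push_cons_iff.mpr ⟨q', γ, hδ, rfl⟩, _, _, P.bisim_refl _,
      Or.inl ⟨q', γ ++ σ, (eats_cons_of_mem hδ σ).trans hσ, rfl, rfl⟩, P.bisim_refl _⟩
  | [], hσ, hs =>
    -- `σ` is used up: continue from the bisimilar `f q (ζ q) ωᵢ'`, whose first step eats into `ζ q`
    rw [SC.push_nil] at hs ⊢
    have hq : q ∈ W := hσ (by rw [eats_nil]; rfl)
    obtain ⟨hne, hζq⟩ := hζ q hq
    obtain ⟨X, ρ, hXρ⟩ := List.exists_cons_of_ne_nil hne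
    obtain ⟨u, hu, hs'u⟩ := (P.isBisim_bisim _ _ (h₁ q hq) a).1 s' hs
    rw [hXρ] at hu hζq
    obtain ⟨q', γ, hδ, rfl⟩ := step_push_cons_iff.mp hu
    obtain ⟨t', ht', hvt'⟩ := (P.isBisim_bisim _ _ (h₂ q hq) a).2 (q', SC.push (γ ++ ρ) ω₂')
      (by rw [hXρ]; exact step_push_cons_iff.mpr ⟨q', γ, hδ, rfl⟩)
    exact ⟨t', ht', _, _, hs'u,
      Or.inr ⟨q', γ ++ ρ, (eats_cons_of_mem hδ ρ).trans hζq, rfl, rfl⟩, hvt'.symm⟩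

end SharedTopStep

section Looping

variable {U V : Set Q} {rp pr : Q → Q} {χ ξ : Q → List Γ} {μ₁ μ₂ ν₁ ν₂ : SC Γ}

theorem isSimUpToBisim_sharedTop (hχ : ∀ p ∈ U, χ p ≠ [] ∧ P.eats (χ p) {rp p} ⊆ V)
    (hξ : ∀ r ∈ V, ξ r ≠ [] ∧ P.eats (ξ r) {pr r} ⊆ U)
    (hU₁ : ∀ p ∈ U, P.Bisim (p, μ₁) (rp p, SC.push (χ p) ν₁))
    (hU₂ : ∀ p ∈ U, P.Bisim (p, μ₂) (rp p, SC.push (χ p) ν₂))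
    (hV₁ : ∀ r ∈ V, P.Bisim (r, ν₁) (pr r, SC.push (ξ r) μ₁))
    (hV₂ : ∀ r ∈ V, P.Bisim (r, ν₂) (pr r, SC.push (ξ r) μ₂)) :
    P.IsSimUpToBisim (fun s t => P.SharedTop U μ₁ μ₂ s t ∨ P.SharedTop V ν₁ ν₂ s t) := by
  rintro s t (hst | hst) a s' hs
  · exact hst.exists_step hχ hU₁ hU₂ hs
  · obtain ⟨t', ht', hs't'⟩ := hst.exists_step hξ hV₁ hV₂ hs
    exact ⟨t', ht', hs't'.mono fun _ _ => Or.symm⟩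

end Looping

end PDS

/-- The looping lemma: given `U, V ⊆ Q` with, for each `p ∈ U`, some `r_p` and
nonempty `χ_p` with `eats_{χ_p}(r_p) ⊆ V`, and conversely for each `r ∈ V` some `p_r`
and nonempty `ξ_r` with `eats_{ξ_r}(p_r) ⊆ U`: if `pμᵢ ∼ r_p χ_p νᵢ` for all `p ∈ U`
and `rνᵢ ∼ p_r ξ_r μᵢ` for all `r ∈ V` (`i ∈ {1,2}`), then `pμ₁ ∼ pμ₂` for all `p ∈ U`
and `rν₁ ∼ rν₂` for all `r ∈ V`. -/
theorem stmt_12 (Q Γ A : Type) (P : PDS Q Γ A) (U V : Set Q)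
    (rp pr : Q → Q) (χ ξ : Q → List Γ)
    (hχ : ∀ p ∈ U, χ p ≠ [] ∧ P.eats (χ p) {rp p} ⊆ V)
    (hξ : ∀ r ∈ V, ξ r ≠ [] ∧ P.eats (ξ r) {pr r} ⊆ U)
    (μ₁ μ₂ ν₁ ν₂ : SC Γ)
    (hU₁ : ∀ p ∈ U, P.Bisim (p, μ₁) (rp p, SC.push (χ p) ν₁))
    (hU₂ : ∀ p ∈ U, P.Bisim (p, μ₂) (rp p, SC.push (χ p) ν₂))
    (hV₁ : ∀ r ∈ V, P.Bisim (r, ν₁) (pr r, SC.push (ξ r) μ₁))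
    (hV₂ : ∀ r ∈ V, P.Bisim (r, ν₂) (pr r, SC.push (ξ r) μ₂)) :
    (∀ p ∈ U, P.Bisim (p, μ₁) (p, μ₂)) ∧ (∀ r ∈ V, P.Bisim (r, ν₁) (r, ν₂)) := by
  have hsim := PDS.isSimUpToBisim_sharedTop hχ hξ hU₁ hU₂ hV₁ hV₂
  have hsim_flip : P.IsSimUpToBisim
      (flip fun s t => P.SharedTop U μ₁ μ₂ s t ∨ P.SharedTop V ν₁ ν₂ s t) := by
    change P.IsSimUpToBisim fun s t =>
      flip (P.SharedTop U μ₁ μ₂) s t ∨ flip (P.SharedTop V ν₁ ν₂) s t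
    rw [PDS.flip_sharedTop, PDS.flip_sharedTop]
    exact PDS.isSimUpToBisim_sharedTop hχ hξ hU₂ hU₁ hV₂ hV₁
  exact ⟨fun p hp => PDS.bisim_of_isSimUpToBisim hsim hsim_flip
      (Or.inl (PDS.sharedTop_self hp μ₁ μ₂)),
    fun r hr => PDS.bisim_of_isSimUpToBisim hsim hsim_flip
      (Or.inr (PDS.sharedTop_self hr ν₁ ν₂))⟩
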